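/- Let v₁ = (0,0,0), v₂ = (1000,0,0), v₃ = (468,847,0), v₄ = (783,−100,−68), v₅ = (238,−712,−640), v₆ = (−141,183,−406), v₇ = (519,−310,161), v₈ = (702,611,−183), v₉ = (395,−121,425), v₁₀ = (764,−480,−432) in ℝ³, and define edge vectors eᵢ = v_{i+1} − vᵢ for i = 1, …, 9 and e₁₀ = v₁ − v₁₀. Then there is no w ∈ ℝ³ such that (−1)^{i+1} (w · eᵢ) > 0 for every i ∈ {1, …, 10}. -/

import Mathlib

/-- The vertices of the paper's 10-stick polygonal realization of the knot `8_6`.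
Here `vert8_6 i` is the paper's vertex `v_(i+1)`. -/
noncomputable def vert8_6 : Fin 10 → (Fin 3 → ℝ) :=
  ![![0, 0, 0], ![1000, 0, 0], ![468, 847, 0], ![783, -100, -68], ![238, -712, -640], ![-141, 183, -406], ![519, -310, 161], ![702, 611, -183], ![395, -121, 425], ![764, -480, -432]]

/-- The edge vectors `eᵢ = v_(i+1) − vᵢ` (cyclically, so `e₁₀ = v₁ − v₁₀`);
here `edge8_6 i` is the paper's `e_(i+1)`, using wrap-around addition on `Fin 10`. -/
noncomputable def edge8_6 (i : Fin 10) : Fin 3 → ℝ :=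
  vert8_6 (i + 1) - vert8_6 i

/-!
Four of the signed edges, `e₁, e₃, e₅` and `−e₆`, have a positive linear combination equal to
zero (a Farkas certificate), so no `w` can have positive dot product with all of them.
-/

/-- The easy direction of Gordan's alternative. -/
theorem not_exists_forall_dotProduct_pos_of_sum_smul_eq_zero {ι : Type*} [Fintype ι] {n : ℕ}
    (u : ι → Fin n → ℝ) (c : ι → ℝ) (hc : 0 ≤ c) (hc0 : c ≠ 0) (hsum : ∑ i, c i • u i = 0) :
    ¬ ∃ w : Fin n → ℝ, ∀ i, 0 < w ⬝ᵥ u i := by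
  rintro ⟨w, hw⟩
  obtain ⟨k, hk⟩ : ∃ k, c k ≠ 0 := Function.ne_iff.mp hc0
  have hpos : 0 < ∑ i, c i * (w ⬝ᵥ u i) :=
    Finset.sum_pos' (fun i _ => mul_nonneg (hc i) (hw i).le)
      ⟨k, Finset.mem_univ k, mul_pos ((hc k).lt_of_ne' hk) (hw k)⟩
  have hzero : ∑ i, c i * (w ⬝ᵥ u i) = 0 := by
    simpa [dotProduct_sum, dotProduct_smul] using congrArg (w ⬝ᵥ ·) hsum
  exact hpos.ne' hzero

/-- Found by solving the `3 × 3` linear system for the coefficients of `e₁, e₃, e₅` with the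
coefficient of `−e₆` fixed. -/
def farkasCertificate8_6 : Fin 10 → ℝ :=
  ![63052921, 0, 311413500, 0, 285236500, 80369000, 0, 0, 0, 0]

theorem sum_farkasCertificate8_6_smul_signed_edge :
    ∑ i, farkasCertificate8_6 i • ((-1 : ℝ) ^ (i : ℕ) • edge8_6 i) = 0 := by
  ext j
  fin_cases j <;>
    simp [Fin.sum_univ_succ, farkasCertificate8_6, edge8_6, vert8_6] <;> norm_num

/-- There is no `w ∈ ℝ³` such that `(−1)^(i+1) (w · eᵢ) > 0` for every
`i ∈ {1, …, 10}`: no projection of this polygon (the knot `8_6`) to a line has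
5 local maxima. (With 0-based indexing `i : Fin 10`, the sign is `(−1)^i`.) -/
theorem no_alternating_direction_8_6 :
    ¬ ∃ w : Fin 3 → ℝ, ∀ i : Fin 10,
        0 < (-1 : ℝ) ^ (i : ℕ) * ∑ j : Fin 3, w j * edge8_6 i j := by
  have hc : 0 ≤ farkasCertificate8_6 := by
    intro i; fin_cases i <;> norm_num [farkasCertificate8_6]
  have hc0 : farkasCertificate8_6 ≠ 0 :=
    fun h => by simpa [farkasCertificate8_6] using congrFun h 0
  have := not_exists_forall_dotProduct_pos_of_sum_smul_eq_zero _ _ hc hc0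
    sum_farkasCertificate8_6_smul_signed_edge
  simp only [dotProduct_smul, smul_eq_mul] at this
  exact this
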